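/- For any four self-adjoint operators A₀, A₁, B₀, B₁ on a finite-dimensional complex Hilbert space with A_i² = I, B_j² = I, and [A_i, B_j] = 0 for all i, j, the operator norm of S = A₀B₀ + A₀B₁ + A₁B₀ − A₁B₁ is at most 2√2 (Tsirelson's bound). -/

import Mathlib

/-!
Landau's identity: for commuting pairs of involutions, the square of the CHSH operator is
`S * S = 4 + (A₀ A₁ - A₁ A₀) (B₁ B₀ - B₀ B₁)`. Involutions that are self-adjoint have norm at most `1`,
so each commutator has norm at most `2` and `‖S * S‖ ≤ 8`. Since `S` is self-adjoint, the C⋆-identity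
gives `‖S‖ ^ 2 = ‖S * S‖ ≤ 8`, that is `‖S‖ ≤ 2√2`.
-/

def chsh {R : Type*} [Ring R] (a₀ a₁ b₀ b₁ : R) : R :=
  a₀ * b₀ + a₀ * b₁ + a₁ * b₀ - a₁ * b₁

section Ring

variable {R : Type*} [Ring R] {a₀ a₁ b₀ b₁ : R}

theorem chsh_mul_self (ha₀ : a₀ * a₀ = 1) (ha₁ : a₁ * a₁ = 1) (hb₀ : b₀ * b₀ = 1)
    (hb₁ : b₁ * b₁ = 1) (h₀₀ : Commute a₀ b₀) (h₀₁ : Commute a₀ b₁) (h₁₀ : Commute a₁ b₀)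
    (h₁₁ : Commute a₁ b₁) :
    chsh a₀ a₁ b₀ b₁ * chsh a₀ a₁ b₀ b₁ = 4 + (a₀ * a₁ - a₁ * a₀) * (b₁ * b₀ - b₀ * b₁) := by
  simp only [chsh, mul_add, add_mul, mul_sub, sub_mul, h₀₀.symm.mul_mul_mul_comm,
    h₀₁.symm.mul_mul_mul_comm, h₁₀.symm.mul_mul_mul_comm, h₁₁.symm.mul_mul_mul_comm,
    ha₀, ha₁, hb₀, hb₁, one_mul, mul_one]
  rw [show (4 : R) = 1 + 1 + 1 + 1 by norm_num]
  abel

theorem IsSelfAdjoint.chsh [StarRing R] (ha₀ : IsSelfAdjoint a₀) (ha₁ : IsSelfAdjoint a₁)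
    (hb₀ : IsSelfAdjoint b₀) (hb₁ : IsSelfAdjoint b₁) (h₀₀ : Commute a₀ b₀)
    (h₀₁ : Commute a₀ b₁) (h₁₀ : Commute a₁ b₀) (h₁₁ : Commute a₁ b₁) :
    IsSelfAdjoint (chsh a₀ a₁ b₀ b₁) :=
  have hab {a b : R} (ha : IsSelfAdjoint a) (hb : IsSelfAdjoint b) (h : Commute a b) :
      IsSelfAdjoint (a * b) := (ha.commute_iff hb).mp h
  (((hab ha₀ hb₀ h₀₀).add (hab ha₀ hb₁ h₀₁)).add (hab ha₁ hb₀ h₁₀)).sub (hab ha₁ hb₁ h₁₁)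

end Ring

theorem norm_mul_sub_mul_le_two {R : Type*} [SeminormedRing R] {a b : R} (ha : ‖a‖ ≤ 1)
    (hb : ‖b‖ ≤ 1) : ‖a * b - b * a‖ ≤ 2 :=
  calc ‖a * b - b * a‖ ≤ ‖a‖ * ‖b‖ + ‖b‖ * ‖a‖ :=
        (norm_sub_le _ _).trans (add_le_add (norm_mul_le _ _) (norm_mul_le _ _))
    _ ≤ 2 := by nlinarith [norm_nonneg a, norm_nonneg b]

section CStarRing

variable {R : Type*} [NormedRing R] [StarRing R] [CStarRing R]

theorem CStarRing.norm_one_le : ‖(1 : R)‖ ≤ 1 := by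
  have h : ‖(1 : R)‖ * ‖(1 : R)‖ = ‖(1 : R)‖ := by
    simpa only [star_one, one_mul] using (CStarRing.norm_star_mul_self (x := (1 : R))).symm
  nlinarith [norm_nonneg (1 : R)]

theorem IsSelfAdjoint.norm_le_one_of_mul_self_eq_one {a : R} (ha : IsSelfAdjoint a)
    (h : a * a = 1) : ‖a‖ ≤ 1 := by
  have hsq : ‖a‖ ^ 2 ≤ 1 := by
    rw [← ha.norm_mul_self, h]
    exact CStarRing.norm_one_le
  nlinarith [norm_nonneg a]

theorem norm_chsh_le {a₀ a₁ b₀ b₁ : R} (ha₀ : IsSelfAdjoint a₀) (ha₁ : IsSelfAdjoint a₁)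
    (hb₀ : IsSelfAdjoint b₀) (hb₁ : IsSelfAdjoint b₁) (ha₀₀ : a₀ * a₀ = 1) (ha₁₁ : a₁ * a₁ = 1)
    (hb₀₀ : b₀ * b₀ = 1) (hb₁₁ : b₁ * b₁ = 1) (h₀₀ : Commute a₀ b₀) (h₀₁ : Commute a₀ b₁)
    (h₁₀ : Commute a₁ b₀) (h₁₁ : Commute a₁ b₁) :
    ‖chsh a₀ a₁ b₀ b₁‖ ≤ 2 * Real.sqrt 2 := by
  have hcomm_a := norm_mul_sub_mul_le_two (ha₀.norm_le_one_of_mul_self_eq_one ha₀₀)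
    (ha₁.norm_le_one_of_mul_self_eq_one ha₁₁)
  have hcomm_b := norm_mul_sub_mul_le_two (hb₁.norm_le_one_of_mul_self_eq_one hb₁₁)
    (hb₀.norm_le_one_of_mul_self_eq_one hb₀₀)
  have hfour : ‖(4 : R)‖ ≤ 4 := by
    simpa using (Nat.norm_cast_le (α := R) 4).trans
      (mul_le_of_le_one_right (by norm_num) CStarRing.norm_one_le)
  have hsq : ‖chsh a₀ a₁ b₀ b₁‖ ^ 2 ≤ 8 :=
    calc ‖chsh a₀ a₁ b₀ b₁‖ ^ 2
        = ‖4 + (a₀ * a₁ - a₁ * a₀) * (b₁ * b₀ - b₀ * b₁)‖ := by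
          rw [← (ha₀.chsh ha₁ hb₀ hb₁ h₀₀ h₀₁ h₁₀ h₁₁).norm_mul_self,
            chsh_mul_self ha₀₀ ha₁₁ hb₀₀ hb₁₁ h₀₀ h₀₁ h₁₀ h₁₁]
      _ ≤ ‖(4 : R)‖ + ‖a₀ * a₁ - a₁ * a₀‖ * ‖b₁ * b₀ - b₀ * b₁‖ :=
          (norm_add_le _ _).trans (add_le_add_right (norm_mul_le _ _) _)
      _ ≤ 8 := by nlinarith [norm_nonneg (a₀ * a₁ - a₁ * a₀)]
  calc ‖chsh a₀ a₁ b₀ b₁‖ ≤ Real.sqrt 8 := Real.le_sqrt_of_sq_le hsq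
    _ = 2 * Real.sqrt 2 := by
      rw [show (8 : ℝ) = 2 ^ 2 * 2 by norm_num, Real.sqrt_mul (by norm_num),
        Real.sqrt_sq (by norm_num)]

end CStarRing

/-- Tsirelson's bound: for self-adjoint involutions `A i`, `B j` on a
finite-dimensional complex Hilbert space with each `A i` commuting with
each `B j`, the CHSH operator has norm at most `2√2`. -/
theorem tsirelson_bound {E : Type*} [NormedAddCommGroup E]
    [InnerProductSpace ℂ E] [FiniteDimensional ℂ E]
    (A B : Fin 2 → E →L[ℂ] E)
    (hA_sa : ∀ i, IsSelfAdjoint (A i)) (hB_sa : ∀ j, IsSelfAdjoint (B j))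
    (hA_inv : ∀ i, A i ∘L A i = 1) (hB_inv : ∀ j, B j ∘L B j = 1)
    (hcomm : ∀ i j, A i ∘L B j = B j ∘L A i) :
    ‖A 0 ∘L B 0 + A 0 ∘L B 1 + A 1 ∘L B 0 - A 1 ∘L B 1‖ ≤
      2 * Real.sqrt 2 :=
  norm_chsh_le (hA_sa 0) (hA_sa 1) (hB_sa 0) (hB_sa 1) (hA_inv 0) (hA_inv 1) (hB_inv 0) (hB_inv 1)
    (hcomm 0 0) (hcomm 0 1) (hcomm 1 0) (hcomm 1 1)
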